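/- Let Γ be a finite directed graph. Every closed inverse subsemigroup of S(Γ) conjugate to a closed inverse subsemigroup of infinite chain type is itself of infinite chain type. Moreover, two closed inverse subsemigroups L, K of infinite chain type are conjugate in S(Γ) if and only if there exist idempotents (s,s) ∈ L and (t,t) ∈ K such that for every directed path p in Γ, (ps,ps) ∈ L if and only if (pt,pt) ∈ K. -/

import Mathlib

/-- A (finite) directed graph: vertices, edges, and source/target maps. -/
structure DGraph where
  V : Type
  E : Type
  src : E → V
  tgt : E → V

namespace DGraph

/-- The vertex reached after traversing a list of edges from a vertex. -/
def walkEnd (G : DGraph) : G.V → List G.E → G.V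
  | v, [] => v
  | _, e :: l => walkEnd G (G.tgt e) l

/-- The list of edges forms a directed walk starting at the given vertex. -/
def IsWalk (G : DGraph) : G.V → List G.E → Prop
  | _, [] => True
  | v, e :: l => G.src e = v ∧ IsWalk G (G.tgt e) l

variable (G : DGraph)

@[simp] theorem walkEnd_nil (v : G.V) : G.walkEnd v [] = v := rfl
@[simp] theorem walkEnd_cons (v : G.V) (e : G.E) (l : List G.E) :
    G.walkEnd v (e :: l) = G.walkEnd (G.tgt e) l := rfl
@[simp] theorem isWalk_nil (v : G.V) : G.IsWalk v [] := trivial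
@[simp] theorem isWalk_cons (v : G.V) (e : G.E) (l : List G.E) :
    G.IsWalk v (e :: l) ↔ G.src e = v ∧ G.IsWalk (G.tgt e) l := Iff.rfl

theorem isWalk_append (v : G.V) (l1 l2 : List G.E) :
    G.IsWalk v (l1 ++ l2) ↔ G.IsWalk v l1 ∧ G.IsWalk (G.walkEnd v l1) l2 := by
  induction l1 generalizing v with
  | nil => simp [IsWalk, walkEnd]
  | cons e l ih => simp [IsWalk, walkEnd, ih, and_assoc]

/-- A directed path in `G`: an initial vertex together with a compatible
list of edges, traversed in order (empty paths are allowed). -/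
structure DPath (G : DGraph) where
  first : G.V
  edges : List G.E
  wf : G.IsWalk first edges

namespace DPath

variable {G}

/-- The terminal vertex of a directed path. -/
def last (p : G.DPath) : G.V := G.walkEnd p.first p.edges

/-- The list of vertices lying on a directed path. -/
def vertexList (p : G.DPath) : List G.V := p.first :: p.edges.map G.tgt

/-- `q` is a suffix (terminal segment) of `p`: `p = l ⬝ q` for some edge list `l`. -/
def IsSuffixOf (q p : G.DPath) : Prop :=
  ∃ l : List G.E, p.edges = l ++ q.edges ∧ q.first = G.walkEnd p.first l

end DPath

theorem isWalk_chopAppend {u v w : G.DPath} (hs : v.IsSuffixOf u) (hvw : v.first = w.first) :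
    G.IsWalk u.first (u.edges.take (u.edges.length - v.edges.length) ++ w.edges) := by
  obtain ⟨l, hl, hfst⟩ := hs
  rw [hl]
  have hlen : (l ++ v.edges).length - v.edges.length = l.length := by simp
  rw [hlen, List.take_left, G.isWalk_append]
  have hu := u.wf
  rw [hl, G.isWalk_append] at hu
  refine ⟨hu.1, ?_⟩
  rw [← hfst, hvw]
  exact w.wf

theorem isWalk_concat {p q : G.DPath} (h : q.first = p.last) :
    G.IsWalk p.first (p.edges ++ q.edges) := by
  rw [G.isWalk_append]
  refine ⟨p.wf, ?_⟩
  show G.IsWalk p.last q.edges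
  rw [← h]
  exact q.wf

/-- Concatenation of composable directed paths. -/
def concatPath (p q : G.DPath) (h : q.first = p.last) : G.DPath :=
  ⟨p.first, p.edges ++ q.edges, G.isWalk_concat h⟩

theorem isWalk_replicate (a : G.E) (h : G.tgt a = G.src a) (m : ℕ) :
    G.IsWalk (G.src a) (List.replicate m a) := by
  induction m with
  | zero => trivial
  | succ n ih => rw [List.replicate_succ, G.isWalk_cons]; exact ⟨rfl, by rw [h]; exact ih⟩

/-- The path traversing a loop `a` exactly `m` times. -/
def loopPow (a : G.E) (h : G.tgt a = G.src a) (m : ℕ) : G.DPath :=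
  ⟨G.src a, List.replicate m a, G.isWalk_replicate a h m⟩

/-- `p` is a nonempty directed circuit. -/
def IsCircuit (p : G.DPath) : Prop := p.edges ≠ [] ∧ p.last = p.first

/-- `p` and `d` share no nontrivial common prefix (initial segment). -/
def NoCommonPrefix (p d : G.DPath) : Prop :=
  ∀ l : List G.E, l ≠ [] → l <+: p.edges → ¬ l <+: d.edges

end DGraph

/-- The underlying set of the graph inverse semigroup `S(Γ)`: pairs of directed
paths with the same initial vertex, together with a zero element. -/
inductive GIS (G : DGraph) where
  | zero : GIS G
  | pair (a b : G.DPath) (h : a.first = b.first) : GIS G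

namespace GIS

open scoped Classical in
/-- The multiplication of the graph inverse semigroup:
`(t,u)(v,w) = (t,pw)` if `u = pv`, `(pt,w)` if `v = pu`, and `0` otherwise. -/
noncomputable def mul {G : DGraph} : GIS G → GIS G → GIS G
  | .zero, _ => .zero
  | .pair _ _ _, .zero => .zero
  | .pair t u h1, .pair v w h2 =>
    if hs : v.IsSuffixOf u then
      .pair t ⟨t.first, u.edges.take (u.edges.length - v.edges.length) ++ w.edges,
        by rw [h1]; exact G.isWalk_chopAppend hs h2⟩ rfl
    else if hs' : u.IsSuffixOf v then
      .pair ⟨v.first, v.edges.take (v.edges.length - u.edges.length) ++ t.edges,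
        G.isWalk_chopAppend hs' h1.symm⟩ w h2
    else .zero

noncomputable instance {G : DGraph} : Mul (GIS G) := ⟨GIS.mul⟩

/-- The inverse: `(v,w)⁻¹ = (w,v)` and `0⁻¹ = 0`. -/
def inv {G : DGraph} : GIS G → GIS G
  | .zero => .zero
  | .pair a b h => .pair b a h.symm

/-- The natural partial order: `x ≤ y` iff `x = e * y` for some idempotent `e`. -/
def le {G : DGraph} (x y : GIS G) : Prop := ∃ e : GIS G, e * e = e ∧ x = e * y

end GIS

/-- `L` is a closed inverse subsemigroup of `S(Γ)`: a nonempty subset closed under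
multiplication, inverses, and upward closed in the natural partial order. -/
def IsCISS (G : DGraph) (L : Set (GIS G)) : Prop :=
  L.Nonempty ∧ (∀ a ∈ L, ∀ b ∈ L, a * b ∈ L) ∧ (∀ a ∈ L, a.inv ∈ L) ∧
    (∀ a ∈ L, ∀ s : GIS G, GIS.le a s → s ∈ L)

/-- The closed inverse subsemigroup `↑{(u,u)}` of (finite) chain type:
all `(q,q)` with `q` a suffix of `u`. -/
def chainSet (G : DGraph) (u : G.DPath) : Set (GIS G) :=
  {x | ∃ q : G.DPath, q.IsSuffixOf u ∧ x = GIS.pair q q rfl}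

/-- The edge list of the `r`-th power of the path `p`. -/
def powEdges {G : DGraph} (p : G.DPath) (r : ℕ) : List G.E :=
  (List.replicate r p.edges).flatten

/-- The closed inverse subsemigroup of cycle type
`L_{p,d} = {(v p^r d, v p^s d) : r,s ≥ 0, v a suffix of p} ∪ {(q,q) : q a suffix of d}`. -/
def cycleSet (G : DGraph) (p d : G.DPath) : Set (GIS G) :=
  {x | (∃ (r s : ℕ) (v a b : G.DPath) (h : a.first = b.first),
          v.IsSuffixOf p ∧ x = GIS.pair a b h ∧
          a.first = v.first ∧ a.edges = v.edges ++ powEdges p r ++ d.edges ∧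
          b.first = v.first ∧ b.edges = v.edges ++ powEdges p s ++ d.edges) ∨
       (∃ q : G.DPath, q.IsSuffixOf d ∧ x = GIS.pair q q rfl)}

/-- `L` is a chain of idempotents: all elements are idempotent and any two are
comparable in the natural partial order. -/
def IsChainOfIdem (G : DGraph) (L : Set (GIS G)) : Prop :=
  (∀ x ∈ L, x * x = x) ∧ ∀ x ∈ L, ∀ y ∈ L, GIS.le x y ∨ GIS.le y x

/-- The set of right cosets `↑(Lt)` (for `t` with `t t⁻¹ ∈ L`) of a closed inverse
subsemigroup `L`. -/
def cosets (G : DGraph) (L : Set (GIS G)) : Set (Set (GIS G)) :=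
  {C | ∃ t : GIS G, t * t.inv ∈ L ∧ C = {s | ∃ x ∈ L, GIS.le (x * t) s}}

/-- `H` and `K` are conjugate: for some `s`, `s⁻¹Hs ⊆ K` and `sKs⁻¹ ⊆ H`. -/
def Conjugate (G : DGraph) (H K : Set (GIS G)) : Prop :=
  ∃ s : GIS G, (∀ h ∈ H, s.inv * h * s ∈ K) ∧ (∀ k ∈ K, s * k * s.inv ∈ H)

/-- The set of directed paths with initial vertex `v` whose first edge (if any)
is not an edge of `w`. -/
def Npaths (G : DGraph) (v : G.V) (w : G.DPath) : Set G.DPath :=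
  {t | t.first = v ∧ ∀ e, t.edges.head? = some e → e ∉ w.edges}


/-!
The idempotents of `S(Γ)` are the `(a, a)`, and `(a, a) ≤ (b, b)` iff `b` is a suffix of `a`.
Two comparable idempotents of the same length are equal, so a closed infinite chain of idempotents
is exactly an unbounded, suffix-closed set of paths, totally ordered by the suffix relation
(and `0` cannot belong to it, since everything lies above `0`).

Conjugation by `σ = (x, y)` replaces a suffix `x` by `y`: it sends `(q x, q x)` to `(q y, q y)`,
sends `(a, a)` with `a` a suffix of `x` to `(y, y)`, and sends `(a, a)` to `0` when `a` and `x`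
are incomparable. Hence a conjugation between infinite chains has `(x, x) ∈ L`, `(y, y) ∈ K` and
matches `(q x, q x) ∈ L` with `(q y, q y) ∈ K`; conversely such a matching with `σ = (s, t)`
is a conjugation. The same description shows that a conjugate of an infinite chain is again one.
-/
theorem List.take_length_sub_of_eq_append {α : Type*} {u l v : List α} (h : u = l ++ v) :
    u.take (u.length - v.length) = l := by
  subst h
  simp

namespace DGraph

variable {G : DGraph}

theorem walkEnd_append (v : G.V) (l₁ l₂ : List G.E) :
    G.walkEnd v (l₁ ++ l₂) = G.walkEnd (G.walkEnd v l₁) l₂ := by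
  induction l₁ generalizing v with
  | nil => rfl
  | cons e l ih => exact ih (G.tgt e)

namespace DPath

theorem ext {p q : G.DPath} (h₁ : p.first = q.first) (h₂ : p.edges = q.edges) : p = q := by
  cases p; cases q; cases h₁; cases h₂; rfl

theorem IsSuffixOf.refl (p : G.DPath) : p.IsSuffixOf p := ⟨[], rfl, rfl⟩

theorem IsSuffixOf.trans {a b c : G.DPath} (hab : a.IsSuffixOf b) (hbc : b.IsSuffixOf c) :
    a.IsSuffixOf c := by
  obtain ⟨l₁, e₁, f₁⟩ := hab
  obtain ⟨l₂, e₂, f₂⟩ := hbc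
  exact ⟨l₂ ++ l₁, by rw [e₂, e₁, List.append_assoc], by rw [walkEnd_append, ← f₂, f₁]⟩

theorem IsSuffixOf.length_le {q p : G.DPath} (h : q.IsSuffixOf p) :
    q.edges.length ≤ p.edges.length := by
  obtain ⟨l, hl, -⟩ := h
  simp [hl]

theorem IsSuffixOf.eq_of_length_le {q p : G.DPath} (h : q.IsSuffixOf p)
    (hlen : p.edges.length ≤ q.edges.length) : q = p := by
  obtain ⟨l, hl, hf⟩ := h
  obtain rfl : l = [] := by simpa [hl] using hlen
  exact ext hf hl.symm

theorem IsSuffixOf.total {a b c : G.DPath} (ha : a.IsSuffixOf c) (hb : b.IsSuffixOf c) :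
    a.IsSuffixOf b ∨ b.IsSuffixOf a := by
  obtain ⟨l₁, e₁, f₁⟩ := ha
  obtain ⟨l₂, e₂, f₂⟩ := hb
  rcases List.append_eq_append_iff.1 (e₁.symm.trans e₂) with ⟨m, rfl, hm⟩ | ⟨m, rfl, hm⟩
  · exact Or.inr ⟨m, hm, by rw [f₂, walkEnd_append, ← f₁]⟩
  · exact Or.inl ⟨m, hm, by rw [f₁, walkEnd_append, ← f₂]⟩

theorem IsSuffixOf.exists_eq_concatPath {x c : G.DPath} (h : x.IsSuffixOf c) :
    ∃ (q : G.DPath) (hq : x.first = q.last), c = G.concatPath q x hq := by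
  obtain ⟨l, hl, hf⟩ := h
  have hw := c.wf
  rw [hl, G.isWalk_append] at hw
  exact ⟨⟨c.first, l, hw.1⟩, hf, ext rfl hl⟩

end DPath

open DPath

theorem concatPath_isSuffixOf_concatPath {q q' x y : G.DPath} {hq : x.first = q.last}
    {hq' : x.first = q'.last} {gq : y.first = q.last} {gq' : y.first = q'.last}
    (h : (G.concatPath q' x hq').IsSuffixOf (G.concatPath q x hq)) :
    (G.concatPath q' y gq').IsSuffixOf (G.concatPath q y gq) := by
  obtain ⟨l, hl, hf⟩ := h
  have hq : q.edges = l ++ q'.edges :=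
    List.append_cancel_right (hl.trans (List.append_assoc _ _ _).symm)
  exact ⟨l, by simp [concatPath, hq], hf⟩

end DGraph

namespace GIS

open DGraph DPath

variable {G : DGraph}

@[simp] protected theorem zero_mul (x : GIS G) : (zero : GIS G) * x = zero := rfl

@[simp] protected theorem mul_zero (x : GIS G) : x * (zero : GIS G) = zero := by cases x <;> rfl

@[simp] theorem inv_pair (a b : G.DPath) (h : a.first = b.first) :
    (pair a b h).inv = pair b a h.symm := rfl

@[simp] protected theorem inv_inv (x : GIS G) : x.inv.inv = x := by cases x <;> rfl

theorem pair_congr {a b a' b' : G.DPath} {h : a.first = b.first} {h' : a'.first = b'.first}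
    (ha : a = a') (hb : b = b') : pair a b h = pair a' b' h' := by
  subst ha hb; rfl

open scoped Classical in
theorem pair_mul_pair (t u v w : G.DPath) (h₁ : t.first = u.first) (h₂ : v.first = w.first) :
    pair t u h₁ * pair v w h₂ =
      if hs : v.IsSuffixOf u then
        pair t ⟨t.first, u.edges.take (u.edges.length - v.edges.length) ++ w.edges,
          by rw [h₁]; exact G.isWalk_chopAppend hs h₂⟩ rfl
      else if hs' : u.IsSuffixOf v then
        pair ⟨v.first, v.edges.take (v.edges.length - u.edges.length) ++ t.edges,
          G.isWalk_chopAppend hs' h₁.symm⟩ w h₂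
      else zero := rfl

theorem pair_mul_pair_of_isSuffixOf {t u v w z : G.DPath} {h₁ : t.first = u.first}
    {h₂ : v.first = w.first} {l : List G.E} (hu : u.edges = l ++ v.edges)
    (hv : v.first = G.walkEnd u.first l) (hzt : z.first = t.first) (hz : z.edges = l ++ w.edges) :
    pair t u h₁ * pair v w h₂ = pair t z hzt.symm := by
  rw [pair_mul_pair, dif_pos ⟨l, hu, hv⟩]
  refine pair_congr rfl (ext hzt.symm ?_)
  rw [hz]
  exact congrArg (· ++ w.edges) (List.take_length_sub_of_eq_append hu)

theorem pair_mul_pair_of_isSuffixOf' {t u v w z : G.DPath} {h₁ : t.first = u.first}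
    {h₂ : v.first = w.first} {l : List G.E} (hv : v.edges = l ++ u.edges)
    (hu : u.first = G.walkEnd v.first l) (hzv : z.first = v.first) (hz : z.edges = l ++ t.edges) :
    pair t u h₁ * pair v w h₂ = pair z w (hzv.trans h₂) := by
  by_cases hs : v.IsSuffixOf u
  · obtain ⟨l', hu', hv'⟩ := hs
    have hlen := congrArg List.length (hv.trans (congrArg (l ++ ·) hu'))
    simp only [List.length_append] at hlen
    obtain rfl : l = [] := List.eq_nil_of_length_eq_zero (by omega)
    obtain rfl : l' = [] := List.eq_nil_of_length_eq_zero (by omega)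
    rw [pair_mul_pair_of_isSuffixOf hu' hv' (z := w) (h₂.symm.trans (hu.symm.trans h₁.symm)) rfl]
    exact pair_congr (ext (h₁.trans (hu.trans hzv.symm)) hz.symm) rfl
  · rw [pair_mul_pair, dif_neg hs, dif_pos ⟨l, hv, hu⟩]
    refine pair_congr (ext hzv.symm ?_) rfl
    rw [hz]
    exact congrArg (· ++ t.edges) (List.take_length_sub_of_eq_append hv)

theorem pair_mul_pair_eq_zero {t u v w : G.DPath} {h₁ : t.first = u.first}
    {h₂ : v.first = w.first} (hvu : ¬ v.IsSuffixOf u) (huv : ¬ u.IsSuffixOf v) :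
    pair t u h₁ * pair v w h₂ = zero := by
  rw [pair_mul_pair, dif_neg hvu, dif_neg huv]

theorem pair_mul_pair_cases (t u v w : G.DPath) (h₁ : t.first = u.first)
    (h₂ : v.first = w.first) :
    pair t u h₁ * pair v w h₂ = zero ∨
    (∃ l z hz, u.edges = l ++ v.edges ∧ v.first = G.walkEnd u.first l ∧
      z.edges = l ++ w.edges ∧ pair t u h₁ * pair v w h₂ = pair t z hz) ∨
    (∃ l z hz, v.edges = l ++ u.edges ∧ u.first = G.walkEnd v.first l ∧
      z.edges = l ++ t.edges ∧ pair t u h₁ * pair v w h₂ = pair z w hz) := by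
  by_cases hvu : v.IsSuffixOf u
  · obtain ⟨l, hu, hv⟩ := id hvu
    rw [pair_mul_pair, dif_pos hvu]
    exact Or.inr (Or.inl ⟨l, _, _, hu, hv,
      congrArg (· ++ w.edges) (List.take_length_sub_of_eq_append hu), rfl⟩)
  · by_cases huv : u.IsSuffixOf v
    · obtain ⟨l, hv, hu⟩ := id huv
      rw [pair_mul_pair, dif_neg hvu, dif_pos huv]
      exact Or.inr (Or.inr ⟨l, _, _, hv, hu,
        congrArg (· ++ t.edges) (List.take_length_sub_of_eq_append hv), rfl⟩)
    · exact Or.inl (pair_mul_pair_eq_zero hvu huv)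

theorem pair_mul_self (a : G.DPath) : pair a a rfl * pair a a rfl = pair a a rfl :=
  pair_mul_pair_of_isSuffixOf (l := []) rfl rfl rfl rfl

theorem eq_of_pair_mul_self {p q : G.DPath} {h : p.first = q.first}
    (hpq : pair p q h * pair p q h = pair p q h) : p = q := by
  rcases pair_mul_pair_cases p q p q h h with h0 | ⟨l, z, hz, hq, -, hze, hP⟩ |
    ⟨l, z, hz, hp, -, hze, hP⟩
  · rw [hpq] at h0
    cases h0
  · obtain ⟨-, rfl⟩ := pair.inj (hpq.symm.trans hP)
    obtain rfl : l = [] := List.append_left_eq_self.1 hze.symm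
    exact ext h hq.symm
  · obtain ⟨rfl, -⟩ := pair.inj (hpq.symm.trans hP)
    obtain rfl : l = [] := List.append_left_eq_self.1 hze.symm
    exact ext h hp

theorem le_pair_of_isSuffixOf {a b : G.DPath} (h : b.IsSuffixOf a) :
    GIS.le (pair a a rfl) (pair b b rfl) := by
  obtain ⟨l, hl, hf⟩ := h
  exact ⟨pair a a rfl, pair_mul_self a, (pair_mul_pair_of_isSuffixOf hl hf rfl hl).symm⟩

theorem isSuffixOf_of_le_pair {a b : G.DPath} (h : GIS.le (pair a a rfl) (pair b b rfl)) :
    b.IsSuffixOf a := by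
  obtain ⟨_ | ⟨c, d, _⟩, he, hab⟩ := h
  · cases hab
  obtain rfl := eq_of_pair_mul_self he
  rcases pair_mul_pair_cases c c b b rfl rfl with h0 | ⟨l, z, hz, hc, hb, hze, hP⟩ |
    ⟨l, z, hz, -, -, -, hP⟩
  · rw [← hab] at h0
    cases h0
  · obtain ⟨rfl, rfl⟩ := pair.inj (hab.trans hP)
    exact ⟨l, hc, hb⟩
  · obtain ⟨-, rfl⟩ := pair.inj (hab.trans hP)
    exact IsSuffixOf.refl _

noncomputable def conj (σ m : GIS G) : GIS G := σ.inv * m * σ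

theorem conj_zero_right (σ : GIS G) : conj σ zero = zero := by
  rw [conj, GIS.mul_zero, GIS.zero_mul]

theorem conj_pair_concatPath (x y q : G.DPath) (hxy : x.first = y.first) (hq : x.first = q.last) :
    conj (pair x y hxy) (pair (G.concatPath q x hq) (G.concatPath q x hq) rfl) =
      pair (G.concatPath q y (hxy.symm.trans hq)) (G.concatPath q y (hxy.symm.trans hq)) rfl := by
  have hleft : pair y x hxy.symm * pair (G.concatPath q x hq) (G.concatPath q x hq) rfl =
      pair (G.concatPath q y (hxy.symm.trans hq)) (G.concatPath q x hq) rfl :=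
    pair_mul_pair_of_isSuffixOf' (t := y) (u := x) (v := G.concatPath q x hq)
      (z := G.concatPath q y (hxy.symm.trans hq)) (l := q.edges) rfl hq rfl rfl
  have hright : pair (G.concatPath q y (hxy.symm.trans hq)) (G.concatPath q x hq) rfl *
      pair x y hxy = pair (G.concatPath q y (hxy.symm.trans hq))
        (G.concatPath q y (hxy.symm.trans hq)) rfl :=
    pair_mul_pair_of_isSuffixOf (u := G.concatPath q x hq) (v := x) (l := q.edges) rfl hq rfl rfl
  rw [conj, inv_pair, hleft, hright]

theorem conj_pair_of_isSuffixOf {x y a : G.DPath} (hxy : x.first = y.first) (ha : a.IsSuffixOf x) :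
    conj (pair x y hxy) (pair a a rfl) = pair y y rfl := by
  obtain ⟨l, hl, hf⟩ := ha
  have hw : G.IsWalk y.first x.edges := hxy ▸ x.wf
  have hleft : pair y x hxy.symm * pair a a rfl = pair y ⟨y.first, x.edges, hw⟩ rfl :=
    pair_mul_pair_of_isSuffixOf (t := y) (u := x) (w := a) (z := ⟨y.first, x.edges, hw⟩)
      hl hf rfl hl
  have hright : pair y ⟨y.first, x.edges, hw⟩ rfl * pair x y hxy = pair y y rfl :=
    pair_mul_pair_of_isSuffixOf (u := ⟨y.first, x.edges, hw⟩) (v := x) (l := []) rfl hxy rfl rfl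
  rw [conj, inv_pair, hleft, hright]

theorem isSuffixOf_total_of_conj_ne_zero {x y a : G.DPath} {hxy : x.first = y.first}
    (h : conj (pair x y hxy) (pair a a rfl) ≠ zero) : a.IsSuffixOf x ∨ x.IsSuffixOf a := by
  by_contra! hax
  exact h (by rw [conj, inv_pair, pair_mul_pair_eq_zero hax.1 hax.2, GIS.zero_mul])

theorem eq_of_conj_eq_pair {x y c d a : G.DPath} {hxy : x.first = y.first}
    {h : c.first = d.first} (hca : conj (pair x y hxy) (pair c d h) = pair a a rfl) : c = d := by
  rw [conj, inv_pair] at hca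
  rcases pair_mul_pair_cases y x c d hxy.symm h with h0 | ⟨l, z, hz, hx, -, hze, hP⟩ |
    ⟨l, z, hz, hc, -, hze, hP⟩
  · rw [h0, GIS.zero_mul] at hca
    cases hca
  · -- `x = l c` and the left product is `(y, l d)`
    rw [hP] at hca
    have hzx : z.edges = x.edges := by
      rcases pair_mul_pair_cases y z x y hz hxy with h0 | ⟨l', z', hz', hz1, -, hz'e, hQ⟩ |
        ⟨l', z', hz', hx1, -, hz'e, hQ⟩
      · rw [hca] at h0
        cases h0
      · obtain ⟨rfl, rfl⟩ := pair.inj (hca.symm.trans hQ)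
        rwa [List.append_left_eq_self.1 hz'e.symm] at hz1
      · obtain ⟨rfl, rfl⟩ := pair.inj (hca.symm.trans hQ)
        rw [List.append_left_eq_self.1 hz'e.symm] at hx1
        exact hx1.symm
    exact ext h (List.append_cancel_left (hze.symm.trans (hzx.trans hx))).symm
  · -- `c = l x` and the left product is `(l y, d)`
    rw [hP] at hca
    rcases pair_mul_pair_cases z d x y hz hxy with h0 | ⟨l', z', hz', hd, -, hz'e, hQ⟩ |
      ⟨l', z', hz', hx1, -, hz'e, hQ⟩
    · rw [hca] at h0
      cases h0
    · obtain ⟨rfl, rfl⟩ := pair.inj (hca.symm.trans hQ)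
      obtain rfl : l = l' := List.append_cancel_right (hze.symm.trans hz'e)
      exact ext h (hc.trans hd.symm)
    · obtain ⟨rfl, rfl⟩ := pair.inj (hca.symm.trans hQ)
      rw [hze, ← List.append_assoc, eq_comm, List.append_left_eq_self, List.append_eq_nil_iff]
        at hz'e
      obtain ⟨rfl, rfl⟩ := hz'e
      exact ext h (hc.trans hx1)

end GIS

open GIS DGraph DPath

section

variable {G : DGraph} {L K M : Set (GIS G)}

theorem IsChainOfIdem.eq_zero_or_eq_pair (hch : IsChainOfIdem G L) {m : GIS G} (hm : m ∈ L) :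
    m = zero ∨ ∃ a : G.DPath, m = pair a a rfl := by
  cases m with
  | zero => exact Or.inl rfl
  | pair a b h =>
    obtain rfl := eq_of_pair_mul_self (hch.1 _ hm)
    exact Or.inr ⟨a, rfl⟩

theorem IsChainOfIdem.isSuffixOf_total (hch : IsChainOfIdem G L) {a b : G.DPath}
    (ha : pair a a rfl ∈ L) (hb : pair b b rfl ∈ L) : a.IsSuffixOf b ∨ b.IsSuffixOf a :=
  (hch.2 _ ha _ hb).symm.imp isSuffixOf_of_le_pair isSuffixOf_of_le_pair

theorem IsChainOfIdem.exists_le_length (hch : IsChainOfIdem G L) (hinf : L.Infinite) (n : ℕ) :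
    ∃ a : G.DPath, pair a a rfl ∈ L ∧ n ≤ a.edges.length := by
  by_contra! hshort
  -- the paths of a chain have pairwise distinct lengths
  have hfin : {a : G.DPath | pair a a rfl ∈ L}.Finite := by
    refine Set.Finite.of_finite_image (f := fun a => a.edges.length)
      ((Set.finite_Iio n).subset ?_) fun a ha b hb hab => ?_
    · rintro _ ⟨a, ha, rfl⟩
      exact hshort a ha
    · rcases hch.isSuffixOf_total ha hb with h | h
      · exact h.eq_of_length_le hab.ge
      · exact (h.eq_of_length_le hab.le).symm
  refine hinf (((hfin.image fun a => pair a a rfl).insert zero).subset fun m hm => ?_)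
  rcases hch.eq_zero_or_eq_pair hm with rfl | ⟨a, rfl⟩
  · exact Set.mem_insert _ _
  · exact Set.mem_insert_of_mem _ ⟨a, hm, rfl⟩

theorem infinite_of_exists_le_length
    (h : ∀ n : ℕ, ∃ a : G.DPath, pair a a rfl ∈ L ∧ n ≤ a.edges.length) : L.Infinite := by
  have hlen : ((fun a : G.DPath => a.edges.length) '' {a | pair a a rfl ∈ L}).Infinite :=
    Set.infinite_of_forall_exists_gt fun n => by
      obtain ⟨a, ha, hn⟩ := h (n + 1)
      exact ⟨_, ⟨a, ha, rfl⟩, hn⟩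
  refine ((hlen.of_image _).image (f := fun a => pair a a rfl)
    fun a _ b _ hab => (pair.inj hab).1).mono ?_
  rintro _ ⟨a, ha, rfl⟩
  exact ha

structure IsInfiniteSuffixChain (L : Set (GIS G)) : Prop where
  zero_notMem : zero ∉ L
  exists_eq_pair : ∀ m ∈ L, ∃ a : G.DPath, m = pair a a rfl
  mem_of_isSuffixOf {a b : G.DPath} : pair a a rfl ∈ L → b.IsSuffixOf a → pair b b rfl ∈ L
  isSuffixOf_total {a b : G.DPath} :
    pair a a rfl ∈ L → pair b b rfl ∈ L → a.IsSuffixOf b ∨ b.IsSuffixOf a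
  exists_le_length (n : ℕ) : ∃ a : G.DPath, pair a a rfl ∈ L ∧ n ≤ a.edges.length

theorem IsInfiniteSuffixChain.of_isCISS (hC : IsCISS G L) (hch : IsChainOfIdem G L)
    (hinf : L.Infinite) : IsInfiniteSuffixChain L := by
  have hzero : zero ∉ L := by
    intro h0
    -- `0` lies below everything, so `L` would contain the non-idempotent `(a, ε)`, `a ≠ ε`
    obtain ⟨a, -, ha⟩ := hch.exists_le_length hinf 1
    have hmem : pair a ⟨a.first, [], trivial⟩ rfl ∈ L := hC.2.2.2 zero h0 _ ⟨zero, rfl, rfl⟩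
    have hlen := congrArg (·.edges.length) (eq_of_pair_mul_self (hch.1 _ hmem))
    simp only [List.length_nil] at hlen
    omega
  exact
    { zero_notMem := hzero
      exists_eq_pair := fun m hm =>
        (hch.eq_zero_or_eq_pair hm).resolve_left fun h => hzero (h ▸ hm)
      mem_of_isSuffixOf := fun ha hb => hC.2.2.2 _ ha _ (le_pair_of_isSuffixOf hb)
      isSuffixOf_total := hch.isSuffixOf_total
      exists_le_length := hch.exists_le_length hinf }

theorem IsInfiniteSuffixChain.nonempty (hL : IsInfiniteSuffixChain L) : L.Nonempty :=
  let ⟨_, ha, _⟩ := hL.exists_le_length 0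
  ⟨_, ha⟩

theorem conjugate_iff_mapsTo :
    Conjugate G L K ↔ ∃ σ : GIS G, Set.MapsTo (conj σ) L K ∧ Set.MapsTo (conj σ.inv) K L := by
  simp only [Conjugate, Set.MapsTo, conj, GIS.inv_inv]

theorem Conjugate.zero_notMem (h : Conjugate G L K) (hL : zero ∉ L) : zero ∉ K := by
  obtain ⟨σ, -, hKL⟩ := conjugate_iff_mapsTo.1 h
  exact fun h0 => hL (conj_zero_right σ.inv ▸ hKL h0)

theorem Conjugate.exists_pair (h : Conjugate G L K) (hL : L.Nonempty) (hK : zero ∉ K) :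
    ∃ (x y : G.DPath) (hxy : x.first = y.first),
      Set.MapsTo (conj (pair x y hxy)) L K ∧ Set.MapsTo (conj (pair y x hxy.symm)) K L := by
  obtain ⟨σ, hLK, hKL⟩ := conjugate_iff_mapsTo.1 h
  cases σ with
  | zero => exact absurd (hLK hL.some_mem) hK
  | pair x y hxy => exact ⟨x, y, hxy, hLK, hKL⟩

theorem concatPath_mem_of_mapsTo {x y q : G.DPath} {hxy : x.first = y.first}
    (h : Set.MapsTo (conj (pair x y hxy)) L K) {hq : x.first = q.last}
    (hm : pair (G.concatPath q x hq) (G.concatPath q x hq) rfl ∈ L) :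
    pair (G.concatPath q y (hxy.symm.trans hq)) (G.concatPath q y (hxy.symm.trans hq)) rfl ∈ K :=
  conj_pair_concatPath x y q hxy hq ▸ h hm

theorem isSuffixOf_total_of_mapsTo {x y a : G.DPath} {hxy : x.first = y.first}
    (h : Set.MapsTo (conj (pair x y hxy)) L K) (hK : zero ∉ K) (ha : pair a a rfl ∈ L) :
    a.IsSuffixOf x ∨ x.IsSuffixOf a :=
  isSuffixOf_total_of_conj_ne_zero fun h0 => hK (h0 ▸ h ha)

theorem IsInfiniteSuffixChain.pair_mem_of_mapsTo (hL : IsInfiniteSuffixChain L) (hK : zero ∉ K)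
    {x y : G.DPath} {hxy : x.first = y.first} (h : Set.MapsTo (conj (pair x y hxy)) L K) :
    pair x x rfl ∈ L := by
  obtain ⟨a, ha, hlen⟩ := hL.exists_le_length x.edges.length
  rcases isSuffixOf_total_of_mapsTo h hK ha with hax | hxa
  · rwa [← hax.eq_of_length_le hlen]
  · exact hL.mem_of_isSuffixOf ha hxa

theorem IsInfiniteSuffixChain.mapsTo_conj (hL : IsInfiniteSuffixChain L) {s t : G.DPath}
    (hst : s.first = t.first) (hs : pair s s rfl ∈ L) (ht : pair t t rfl ∈ K)
    (h : ∀ (q : G.DPath) (hq : s.first = q.last),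
      pair (G.concatPath q s hq) (G.concatPath q s hq) rfl ∈ L →
        ∃ hq' : t.first = q.last, pair (G.concatPath q t hq') (G.concatPath q t hq') rfl ∈ K) :
    Set.MapsTo (conj (pair s t hst)) L K := by
  intro m hm
  obtain ⟨a, rfl⟩ := hL.exists_eq_pair m hm
  rcases hL.isSuffixOf_total hm hs with has | hsa
  · rwa [conj_pair_of_isSuffixOf hst has]
  · obtain ⟨q, hq, rfl⟩ := hsa.exists_eq_concatPath
    obtain ⟨_, hqt⟩ := h q hq hm
    rwa [conj_pair_concatPath]

theorem IsInfiniteSuffixChain.of_conjugate (hL : IsInfiniteSuffixChain L)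
    (hconj : Conjugate G L M) : IsChainOfIdem G M ∧ M.Infinite := by
  have hM : zero ∉ M := hconj.zero_notMem hL.zero_notMem
  obtain ⟨x, y, hxy, hLM, hML⟩ := hconj.exists_pair hL.nonempty hM
  have hdiag : ∀ m ∈ M, ∃ c : G.DPath, m = pair c c rfl := by
    rintro (_ | ⟨c, d, h⟩) hm
    · exact absurd hm hM
    · obtain ⟨a, ha⟩ := hL.exists_eq_pair _ (hML hm)
      obtain rfl := eq_of_conj_eq_pair ha
      exact ⟨c, rfl⟩
  have hy {c : G.DPath} (hc : pair c c rfl ∈ M) : c.IsSuffixOf y ∨ y.IsSuffixOf c :=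
    isSuffixOf_total_of_mapsTo hML hL.zero_notMem hc
  have htotal {c c' : G.DPath} (hc : pair c c rfl ∈ M) (hc' : pair c' c' rfl ∈ M) :
      c.IsSuffixOf c' ∨ c'.IsSuffixOf c := by
    rcases hy hc with hcy | hyc <;> rcases hy hc' with hc'y | hyc'
    · exact hcy.total hc'y
    · exact Or.inl (hcy.trans hyc')
    · exact Or.inr (hc'y.trans hyc)
    · obtain ⟨q, hq, rfl⟩ := hyc.exists_eq_concatPath
      obtain ⟨q', hq', rfl⟩ := hyc'.exists_eq_concatPath
      exact (hL.isSuffixOf_total (concatPath_mem_of_mapsTo hML hc)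
        (concatPath_mem_of_mapsTo hML hc')).imp
          concatPath_isSuffixOf_concatPath concatPath_isSuffixOf_concatPath
  refine ⟨⟨fun m hm => ?_, fun m hm m' hm' => ?_⟩, infinite_of_exists_le_length fun n => ?_⟩
  · obtain ⟨c, rfl⟩ := hdiag m hm
    exact pair_mul_self c
  · obtain ⟨c, rfl⟩ := hdiag m hm
    obtain ⟨c', rfl⟩ := hdiag m' hm'
    exact (htotal hm hm').symm.imp le_pair_of_isSuffixOf le_pair_of_isSuffixOf
  · obtain ⟨a, ha, hlen⟩ := hL.exists_le_length (n + x.edges.length + 1)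
    rcases isSuffixOf_total_of_mapsTo hLM hM ha with hax | hxa
    · have := hax.length_le
      omega
    obtain ⟨q, hq, rfl⟩ := hxa.exists_eq_concatPath
    refine ⟨_, concatPath_mem_of_mapsTo hLM ha, ?_⟩
    simp only [concatPath, List.length_append] at hlen ⊢
    omega

theorem IsInfiniteSuffixChain.conjugate_iff (hL : IsInfiniteSuffixChain L)
    (hK : IsInfiniteSuffixChain K) :
    Conjugate G L K ↔
      ∃ s t : G.DPath, pair s s rfl ∈ L ∧ pair t t rfl ∈ K ∧
        ∀ p : G.DPath,
          ((∃ h : s.first = p.last, pair (G.concatPath p s h) (G.concatPath p s h) rfl ∈ L) ↔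
           (∃ h : t.first = p.last, pair (G.concatPath p t h) (G.concatPath p t h) rfl ∈ K)) := by
  constructor
  · intro hconj
    obtain ⟨x, y, hxy, hLK, hKL⟩ := hconj.exists_pair hL.nonempty hK.zero_notMem
    refine ⟨x, y, hL.pair_mem_of_mapsTo hK.zero_notMem hLK,
      hK.pair_mem_of_mapsTo hL.zero_notMem hKL, fun p => ⟨?_, ?_⟩⟩
    · rintro ⟨_, hm⟩
      exact ⟨_, concatPath_mem_of_mapsTo hLK hm⟩
    · rintro ⟨_, hm⟩
      exact ⟨_, concatPath_mem_of_mapsTo hKL hm⟩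
  · rintro ⟨s, t, hs, ht, hst⟩
    -- the empty path at `s.first` forces `s` and `t` to start at the same vertex
    have hfirst : s.first = t.first := ((hst ⟨s.first, [], trivial⟩).1 ⟨rfl, hs⟩).1.symm
    exact conjugate_iff_mapsTo.2 ⟨pair s t hfirst,
      hL.mapsTo_conj hfirst hs ht fun q hq hm => (hst q).1 ⟨hq, hm⟩,
      hK.mapsTo_conj hfirst.symm ht hs fun q hq hm => (hst q).2 ⟨hq, hm⟩⟩

end

theorem stmt_12_general (G : DGraph) :
    (∀ L M : Set (GIS G), IsCISS G L → IsChainOfIdem G L → L.Infinite →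
      IsCISS G M → Conjugate G L M → IsChainOfIdem G M ∧ M.Infinite) ∧
    (∀ L K : Set (GIS G), IsCISS G L → IsChainOfIdem G L → L.Infinite →
      IsCISS G K → IsChainOfIdem G K → K.Infinite →
      (Conjugate G L K ↔
        ∃ s t : G.DPath, GIS.pair s s rfl ∈ L ∧ GIS.pair t t rfl ∈ K ∧
          ∀ p : G.DPath,
            ((∃ h : s.first = p.last,
                GIS.pair (G.concatPath p s h) (G.concatPath p s h) rfl ∈ L) ↔
             (∃ h : t.first = p.last,
                GIS.pair (G.concatPath p t h) (G.concatPath p t h) rfl ∈ K)))) :=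
  ⟨fun _ _ hL hLc hLi _ hconj => (IsInfiniteSuffixChain.of_isCISS hL hLc hLi).of_conjugate hconj,
    fun _ _ hL hLc hLi hK hKc hKi =>
      (IsInfiniteSuffixChain.of_isCISS hL hLc hLi).conjugate_iff
        (IsInfiniteSuffixChain.of_isCISS hK hKc hKi)⟩

/-- any closed inverse subsemigroup conjugate to one of infinite chain
type is of infinite chain type, and two infinite chain type subsemigroups `L`, `K`
are conjugate iff there are idempotents `(s,s) ∈ L`, `(t,t) ∈ K` such that for every
path `p`: `(ps,ps) ∈ L ↔ (pt,pt) ∈ K`. -/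
theorem stmt_12 (G : DGraph) [Fintype G.V] [Fintype G.E] :
    (∀ L M : Set (GIS G), IsCISS G L → IsChainOfIdem G L → L.Infinite →
      IsCISS G M → Conjugate G L M → IsChainOfIdem G M ∧ M.Infinite) ∧
    (∀ L K : Set (GIS G), IsCISS G L → IsChainOfIdem G L → L.Infinite →
      IsCISS G K → IsChainOfIdem G K → K.Infinite →
      (Conjugate G L K ↔
        ∃ s t : G.DPath, GIS.pair s s rfl ∈ L ∧ GIS.pair t t rfl ∈ K ∧
          ∀ p : G.DPath,
            ((∃ h : s.first = p.last,
                GIS.pair (G.concatPath p s h) (G.concatPath p s h) rfl ∈ L) ↔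
             (∃ h : t.first = p.last,
                GIS.pair (G.concatPath p t h) (G.concatPath p t h) rfl ∈ K)))) :=
  stmt_12_general G
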